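/- Define, for complex s, the Euler product J_4(s) = ∏_{p prime} (1−p^{−2s})³·(1−p^{−4s})³ / ((1+2p^{−s})·(1−p^{−s})²·(1−p^{−3s})²). Then the product defining J_4(s) converges (is multipliable) for every complex s with Re s > 1/5, and for every complex s with Re s > 1 one has (∑_{n=1}^{∞} (−2)^{Ω(n)} n^{−s}) · ζ(s)²·ζ(3s)² = ζ(2s)³·ζ(4s)³·J_4(s). -/

import Mathlib

/-!
With `x = p ^ (-s)` the factor `J4Term s p` is the rational function
`(1 - x²)³ (1 - x⁴)³ / ((1 + 2x) (1 - x)² (1 - x³)²)`, which is `1 + O(x⁵)` at `x = 0`.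
Since `∑ₚ |p ^ (-5s)|` converges for `Re s > 1/5`, the product converges there.
For `Re s > 1` every factor of the identity is an absolutely convergent Euler product:
`∑ (-2)^Ω(n) n^(-s) = ∏ₚ (1 + 2 p^(-s))⁻¹` (its absolute convergence comes from bounding the
partial sums by the partial Euler products) and `ζ(ks) = ∏ₚ (1 - p^(-ks))⁻¹`, so the identity
reduces to an identity of rational functions in `x`, prime by prime.
-/

open ArithmeticFunction

/-- The factor at the prime `p` in the Euler product defining `J₄(s)`. -/
noncomputable def J4Term (s : ℂ) (p : Nat.Primes) : ℂ :=
  (1 - ((p : ℕ) : ℂ) ^ (-(2 * s))) ^ 3 * (1 - ((p : ℕ) : ℂ) ^ (-(4 * s))) ^ 3 /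
    ((1 + 2 * ((p : ℕ) : ℂ) ^ (-s)) * (1 - ((p : ℕ) : ℂ) ^ (-s)) ^ 2 *
      (1 - ((p : ℕ) : ℂ) ^ (-(3 * s))) ^ 2)

open Complex Filter Asymptotics Topology

theorem summable_norm_of_summable_norm_primes {F : Type*} [NormedField F] {f : ℕ →*₀ F}
    (hlt : ∀ {p : ℕ}, p.Prime → ‖f p‖ < 1) (hsum : Summable fun p : Nat.Primes ↦ ‖f p‖) :
    Summable (‖f ·‖) := by
  -- Partial sums are dominated by the Euler products over the primes below `N`, and those are
  -- bounded by `exp (∑' p, -log (1 - ‖f p‖))`.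
  have hlog : Summable fun p : Nat.Primes ↦ -Real.log (1 - ‖f p‖) := by
    simpa [sub_eq_add_neg] using (Real.summable_log_one_add_of_summable hsum.neg).neg
  have hprod (N : ℕ) : ∏ p ∈ N.primesBelow, (1 - ‖f p‖)⁻¹ ≤
      Real.exp (∑' p : Nat.Primes, -Real.log (1 - ‖f p‖)) := by
    have hprime {p : ℕ} (hp : p ∈ N.primesBelow) : p.Prime := Nat.prime_of_mem_primesBelow hp
    calc ∏ p ∈ N.primesBelow, (1 - ‖f p‖)⁻¹
        = Real.exp (∑ p ∈ N.primesBelow, -Real.log (1 - ‖f p‖)) := by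
          rw [Real.exp_sum]
          refine Finset.prod_congr rfl fun p hp ↦ ?_
          rw [Real.exp_neg, Real.exp_log (sub_pos.2 (hlt (hprime hp)))]
      _ ≤ _ := by
          rw [Real.exp_le_exp, ← Finset.sum_subtype_of_mem _ fun p hp ↦ hprime hp]
          have hnonneg (p : Nat.Primes) : 0 ≤ -Real.log (1 - ‖f p‖) :=
            neg_nonneg.2 (Real.log_nonpos (sub_nonneg.2 (hlt p.prop).le)
              (sub_le_self _ (norm_nonneg _)))
          exact hlog.sum_le_tsum (ι := Nat.Primes) _ fun p _ ↦ hnonneg p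
  let g : ℕ →* ℝ := ((normHom : F →*₀ ℝ).comp f : ℕ →*₀ ℝ)
  refine summable_of_sum_range_le (c := Real.exp (∑' p : Nat.Primes, -Real.log (1 - ‖f p‖)))
    (fun n ↦ norm_nonneg _) fun N ↦ ?_
  obtain ⟨-, hsmooth⟩ :=
    EulerProduct.summable_and_hasSum_smoothNumbers_prod_primesBelow_geometric (f := g)
      (fun hp ↦ by simpa [g] using hlt hp) N
  calc ∑ n ∈ Finset.range N, ‖f n‖
      = ∑ n ∈ Finset.range N, N.smoothNumbers.indicator (‖f ·‖) n := by
        refine Finset.sum_congr rfl fun n hn ↦ ?_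
        rcases eq_or_ne n 0 with rfl | hn0
        · rw [Set.indicator_of_notMem fun h ↦ h.1 rfl, _root_.map_zero, norm_zero]
        · exact (Set.indicator_of_mem (Nat.mem_smoothNumbers_of_lt (Nat.pos_of_ne_zero hn0)
            (Finset.mem_range.1 hn)) (‖f ·‖)).symm
    _ ≤ ∑' n, N.smoothNumbers.indicator (‖f ·‖) n :=
        (summable_subtype_iff_indicator.1 hsmooth.summable).sum_le_tsum _
          fun n _ ↦ Set.indicator_nonneg (fun _ _ ↦ norm_nonneg _) n
    _ = ∏ p ∈ N.primesBelow, (1 - ‖f p‖)⁻¹ := by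
        rw [← tsum_subtype]; exact hsmooth.tsum_eq
    _ ≤ _ := hprod N

noncomputable def cardFactorsSummandHom (a : ℂ) {s : ℂ} (hs : s ≠ 0) : ℕ →*₀ ℂ where
  toFun n := a ^ cardFactors n * (n : ℂ) ^ (-s)
  map_zero' := by simp [hs]
  map_one' := by simp
  map_mul' m n := by
    rcases eq_or_ne m 0 with rfl | hm
    · simp [hs]
    rcases eq_or_ne n 0 with rfl | hn
    · simp [hs]
    simp only [cardFactors_mul hm hn, pow_add, Nat.cast_mul, natCast_mul_natCast_cpow]
    ring

lemma cardFactorsSummandHom_apply (a : ℂ) {s : ℂ} (hs : s ≠ 0) (n : ℕ) :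
    cardFactorsSummandHom a hs n = a ^ cardFactors n * (n : ℂ) ^ (-s) := rfl

lemma norm_natCast_cpow_neg_le {n : ℕ} (hn : 2 ≤ n) {s : ℂ} (hs : 0 ≤ s.re) :
    ‖(n : ℂ) ^ (-s)‖ ≤ 2 ^ (-s.re) := by
  rw [norm_natCast_cpow_of_pos (by omega), neg_re]
  exact Real.rpow_le_rpow_of_nonpos two_pos (by exact_mod_cast hn) (neg_nonpos.2 hs)

lemma summable_norm_primes_cpow_neg {s : ℂ} (hs : 1 < s.re) :
    Summable fun p : Nat.Primes ↦ ‖((p : ℕ) : ℂ) ^ (-s)‖ :=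
  (summable_riemannZetaSummand hs).comp_injective Nat.Primes.coe_nat_injective

theorem pow_cardFactors_eulerProduct_hasProd (a : ℂ) {s : ℂ} (hs : 1 < s.re)
    (ha : ‖a‖ < 2 ^ s.re) :
    HasProd (fun p : Nat.Primes ↦ (1 - a * ((p : ℕ) : ℂ) ^ (-s))⁻¹)
      (∑' n : ℕ, a ^ cardFactors n / (n : ℂ) ^ s) := by
  set f := cardFactorsSummandHom a (ne_zero_of_one_lt_re hs)
  have hprime {p : ℕ} (hp : p.Prime) : f p = a * (p : ℂ) ^ (-s) := by
    rw [cardFactorsSummandHom_apply, cardFactors_apply_prime hp, pow_one]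
  have hprimes (p : Nat.Primes) : f p = a * ((p : ℕ) : ℂ) ^ (-s) := hprime p.prop
  have hlt {p : ℕ} (hp : p.Prime) : ‖f p‖ < 1 := by
    rw [hprime hp, norm_mul]
    calc ‖a‖ * ‖(p : ℂ) ^ (-s)‖ ≤ ‖a‖ * 2 ^ (-s.re) :=
          mul_le_mul_of_nonneg_left (norm_natCast_cpow_neg_le hp.two_le (by linarith))
            (norm_nonneg a)
      _ < 2 ^ s.re * 2 ^ (-s.re) := by gcongr
      _ = 1 := by rw [← Real.rpow_add two_pos, add_neg_cancel, Real.rpow_zero]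
  have hsum : Summable fun p : Nat.Primes ↦ ‖f p‖ := by
    simpa only [hprimes, norm_mul] using
      (summable_norm_primes_cpow_neg hs).mul_left ‖a‖
  have hterm (n : ℕ) : f n = a ^ cardFactors n / (n : ℂ) ^ s := by
    rw [cardFactorsSummandHom_apply, cpow_neg, div_eq_mul_inv]
  have := EulerProduct.eulerProduct_completely_multiplicative_hasProd
    (summable_norm_of_summable_norm_primes hlt hsum)
  rw [tsum_congr hterm] at this
  simpa only [hprimes] using this

noncomputable def J4LocalFactor (x : ℂ) : ℂ :=
  (1 - x ^ 2) ^ 3 * (1 - x ^ 4) ^ 3 / ((1 + 2 * x) * (1 - x) ^ 2 * (1 - x ^ 3) ^ 2)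

lemma cpow_neg_pow (x s : ℂ) (k : ℕ) : (x ^ (-s)) ^ k = x ^ (-(k * s)) := by
  rw [← cpow_nat_mul, mul_neg]

lemma J4Term_eq_J4LocalFactor (s : ℂ) (p : Nat.Primes) :
    J4Term s p = J4LocalFactor (((p : ℕ) : ℂ) ^ (-s)) := by
  simp only [J4Term, J4LocalFactor, cpow_neg_pow, Nat.cast_ofNat]

lemma J4LocalFactor_sub_one_isBigO :
    (fun x ↦ J4LocalFactor x - 1) =O[𝓝 0] fun x ↦ x ^ 5 := by
  set D : ℂ → ℂ := fun x ↦ (1 + 2 * x) * (1 - x) ^ 2 * (1 - x ^ 3) ^ 2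
  -- numerator - denominator of `J4LocalFactor x` is `x ^ 5 * Q x`
  set Q : ℂ → ℂ := fun x ↦ -6 + 11 * x - 3 * x ^ 3 - 2 * x ^ 4 - 6 * x ^ 5 + 8 * x ^ 7
    - 3 * x ^ 11 + x ^ 13
  have hD : Continuous D := by fun_prop
  have hQ : Continuous Q := by fun_prop
  have hD0 : D 0 ≠ 0 := by simp [D]
  have heq : (fun x ↦ J4LocalFactor x - 1) =ᶠ[𝓝 0] fun x ↦ x ^ 5 * (Q x / D x) := by
    filter_upwards [hD.continuousAt.eventually_ne hD0] with x hx
    rw [J4LocalFactor, div_sub_one hx, mul_div_assoc']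
    congr 1
    ring
  have hbdd : (fun x ↦ Q x / D x) =O[𝓝 0] fun _ ↦ (1 : ℂ) :=
    ((hQ.continuousAt.div hD.continuousAt hD0).tendsto).isBigO_one ℂ
  simpa using heq.trans_isBigO ((isBigO_refl (fun x : ℂ ↦ x ^ 5) _).mul hbdd)

lemma eulerFactors_eq_J4LocalFactor_mul {x : ℂ} (hx : ‖x‖ < 1 / 2) :
    (1 + 2 * x)⁻¹ * ((1 - x)⁻¹) ^ 2 * ((1 - x ^ 3)⁻¹) ^ 2 =
      ((1 - x ^ 2)⁻¹) ^ 3 * ((1 - x ^ 4)⁻¹) ^ 3 * J4LocalFactor x := by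
  have hsub {k : ℕ} (hk : k ≠ 0) : 1 - x ^ k ≠ 0 := by
    refine sub_ne_zero.2 fun h ↦ ?_
    have : ‖x‖ ^ k < 1 := pow_lt_one₀ (norm_nonneg x) (by linarith) hk
    rw [← norm_pow, ← h, norm_one] at this
    exact lt_irrefl _ this
  have hadd : 1 + 2 * x ≠ 0 := by
    intro h
    have : ‖2 * x‖ = 1 := by rw [eq_neg_of_add_eq_zero_right h, norm_neg, norm_one]
    rw [norm_mul, Complex.norm_two] at this
    linarith
  have h₁ : 1 - x ≠ 0 := by simpa using hsub one_ne_zero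
  have h₂ := hsub two_ne_zero
  have h₃ := hsub three_ne_zero
  have h₄ := hsub four_ne_zero
  rw [J4LocalFactor]
  field_simp

lemma tendsto_primes_cpow_neg_nhds_zero {s : ℂ} (hs : 0 < s.re) :
    Tendsto (fun p : Nat.Primes ↦ ((p : ℕ) : ℂ) ^ (-s)) cofinite (𝓝 0) := by
  rw [tendsto_zero_iff_norm_tendsto_zero]
  have hcoe : Tendsto (fun p : Nat.Primes ↦ ((p : ℕ) : ℝ)) cofinite atTop :=
    tendsto_natCast_atTop_atTop.comp
      (Nat.cofinite_eq_atTop ▸ Nat.Primes.coe_nat_injective.tendsto_cofinite)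
  refine ((tendsto_rpow_neg_atTop hs).comp hcoe).congr fun p ↦ ?_
  simp [norm_natCast_cpow_of_pos p.prop.pos]

theorem multipliable_J4Term {s : ℂ} (hs : 1 / 5 < s.re) : Multipliable (J4Term s) := by
  have hbigO : (fun p : Nat.Primes ↦ J4Term s p - 1) =O[cofinite]
      fun p ↦ ‖((p : ℕ) : ℂ) ^ (-(5 * s))‖ := by
    simpa [Function.comp_def, J4Term_eq_J4LocalFactor, cpow_neg_pow] using
      (J4LocalFactor_sub_one_isBigO.comp_tendsto
        (tendsto_primes_cpow_neg_nhds_zero (by linarith))).norm_right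
  have hsum := summable_of_isBigO (summable_norm_primes_cpow_neg (by simp; linarith)) hbigO
  simpa using Complex.multipliable_one_add_of_summable hsum

lemma riemannZeta_eulerProduct_hasProd_pow {s : ℂ} {k : ℕ} (hs : 1 < (k * s).re) :
    HasProd (fun p : Nat.Primes ↦ (1 - (((p : ℕ) : ℂ) ^ (-s)) ^ k)⁻¹) (riemannZeta (k * s)) := by
  simpa only [cpow_neg_pow] using riemannZeta_eulerProduct_hasProd hs

lemma norm_primes_cpow_neg_lt_half {s : ℂ} (hs : 1 < s.re) (p : Nat.Primes) :
    ‖((p : ℕ) : ℂ) ^ (-s)‖ < 1 / 2 := by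
  refine (norm_natCast_cpow_neg_le p.prop.two_le (by linarith)).trans_lt ?_
  rw [one_div, ← Real.rpow_neg_one]
  exact Real.rpow_lt_rpow_of_exponent_lt one_lt_two (neg_lt_neg hs)

theorem J4_multipliable_and_identity :
    (∀ s : ℂ, 1 / 5 < s.re → Multipliable (J4Term s)) ∧
    (∀ s : ℂ, 1 < s.re →
      (∑' n : ℕ, (-2 : ℂ) ^ (cardFactors n) / (n : ℂ) ^ s) *
        (riemannZeta s ^ 2 * riemannZeta (3 * s) ^ 2) =
        riemannZeta (2 * s) ^ 3 * riemannZeta (4 * s) ^ 3 * ∏' p : Nat.Primes, J4Term s p) := by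
  refine ⟨fun s hs ↦ multipliable_J4Term hs, fun s hs ↦ ?_⟩
  have hre {k : ℕ} (hk : 1 ≤ k) : 1 < ((k : ℂ) * s).re := by
    have : (1 : ℝ) ≤ k := by exact_mod_cast hk
    rw [mul_re, natCast_re, natCast_im, zero_mul, sub_zero]
    nlinarith
  have hF := pow_cardFactors_eulerProduct_hasProd (-2) hs (by
    simpa using Real.rpow_lt_rpow_of_exponent_lt one_lt_two hs)
  have hL := (hF.mul ((riemannZeta_eulerProduct_hasProd_pow (hre le_rfl)).pow 2)).mul
    ((riemannZeta_eulerProduct_hasProd_pow (k := 3) (hre (by norm_num))).pow 2)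
  have hR := (((riemannZeta_eulerProduct_hasProd_pow (k := 2) (hre (by norm_num))).pow 3).mul
    ((riemannZeta_eulerProduct_hasProd_pow (k := 4) (hre (by norm_num))).pow 3)).mul
    (multipliable_J4Term (s := s) (by linarith)).hasProd
  simp only [neg_mul, sub_neg_eq_add, Nat.cast_one, one_mul, pow_one, Nat.cast_ofNat,
    J4Term_eq_J4LocalFactor,
    ← eulerFactors_eq_J4LocalFactor_mul (norm_primes_cpow_neg_lt_half hs _)] at hL hR ⊢
  rw [← mul_assoc, hL.unique hR]
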